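/- For any n ≥ 4 and any p > 1, λ_{1,p}(P_{n+1}) > λ_{1,p}(T_{n,3}), where P_{n+1} is the path graph on n+1 vertices and T_{n,3} is the tadpole graph on n vertices with head of size 3. -/

import Mathlib

open scoped Classical

noncomputable section

/-- The term `|f x - f y| ^ p` as a function on unordered pairs. -/
noncomputable def edgeTerm {V : Type*} (p : ℝ) (f : V → ℝ) : Sym2 V → ℝ :=
  Sym2.lift ⟨fun x y => |f x - f y| ^ p, fun x y => by dsimp only; rw [abs_sub_comm]⟩

/-- The `p`-Rayleigh quotient of a function on a finite graph. -/
noncomputable def rayleigh {V : Type*} [Fintype V] [DecidableEq V] (G : SimpleGraph V)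
    (p : ℝ) (f : V → ℝ) : ℝ :=
  (∑ e ∈ G.edgeFinset, edgeTerm p f e) / ∑ v, |f v| ^ p

/-- The first `p`-Dirichlet eigenvalue: infimum of the Rayleigh quotient over nonzero
functions vanishing on the boundary (vertices of degree one). -/
noncomputable def lambda1 {V : Type*} [Fintype V] [DecidableEq V] (G : SimpleGraph V)
    (p : ℝ) : ℝ :=
  sInf {r | ∃ f : V → ℝ, f ≠ 0 ∧ (∀ v, G.degree v = 1 → f v = 0) ∧ r = rayleigh G p f}

/-- The tadpole graph `T_{n,i}` on vertices `0,…,n-1` (vertex `t_k` is `k-1`):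
edges `t_k t_{k+1}` for `1 ≤ k ≤ n-1` together with the edge `t_1 t_i`. -/
def tadpole (n i : ℕ) : SimpleGraph (Fin n) :=
  SimpleGraph.fromRel (fun a b => a.val + 1 = b.val ∨ (a.val = 0 ∧ b.val = i - 1))

/-- The path graph on `n` vertices `0,…,n-1`. -/
def pathG (n : ℕ) : SimpleGraph (Fin n) :=
  SimpleGraph.fromRel (fun a b : Fin n => a.val + 1 = b.val)

/-- The set of edges of `G` with exactly one endpoint in `U`. -/
noncomputable def crossEdges {V : Type*} [Fintype V] [DecidableEq V] (G : SimpleGraph V)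
    (U : Finset V) : Finset (Sym2 V) :=
  G.edgeFinset.filter fun e =>
    Sym2.lift ⟨fun x y => (x ∈ U ∧ y ∉ U) ∨ (x ∉ U ∧ y ∈ U),
      fun x y => by simp only [eq_iff_iff]; tauto⟩ e

/-- The Dirichlet Cheeger constant: infimum of `|E(U,Uᶜ)|/|U|` over nonempty sets `U`
of interior vertices (vertices of degree at least two). -/
noncomputable def dCheeger {V : Type*} [Fintype V] [DecidableEq V] (G : SimpleGraph V) : ℝ :=
  sInf {r | ∃ U : Finset V, U.Nonempty ∧ (∀ v ∈ U, 2 ≤ G.degree v) ∧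
    r = ((crossEdges G U).card : ℝ) / U.card}

/-!
Number the vertices of `P_{n+1}` as `v₀, …, vₙ`, and let `f ≥ 0` be a minimizer of its
Rayleigh quotient (it exists by compactness, and `|f|` is as good as `f`), with value
`λ = λ_{1,p}(P_{n+1})`. Its Euler–Lagrange equation
`φ(f vₖ - f vₖ₋₁) - φ(f vₖ₊₁ - f vₖ) = λ φ(f vₖ)`, where `φ x = |x|^(p-2) x` is increasing, makes
the increments `dₖ = f vₖ₊₁ - f vₖ` non-increasing; since `f` vanishes at the ends and is
nonzero, `d₀ > 0`. Reversing the path if necessary, also `d₁ ≥ 0`.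

Now delete `v₀, v₁` and attach a twin of `v₂` to `v₂` and `v₃`: this is `T_{n,3}`. Transporting
`f` (with value `f v₂` on the twin) loses energy `d₀^p + d₁^p`, gains `|d₂|^p`, and increases the
mass by `f(v₂)^p - f(v₁)^p ≥ 0`. Concavity and `f v₄ ≥ 0` give `|d₂| ≤ d₀`, and `|d₂| < d₀` when
`d₁ = 0`, so `|d₂|^p < d₀^p + d₁^p` and the folded function has Rayleigh quotient `< λ`.
-/

open Finset SimpleGraph

/-- `signedRpow p x = sign x * |x| ^ (p - 1)`, the derivative of `|x| ^ p / p`. -/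
def signedRpow (p x : ℝ) : ℝ := |x| ^ (p - 2) * x

lemma signedRpow_neg (p x : ℝ) : signedRpow p (-x) = -signedRpow p x := by
  simp [signedRpow]

lemma signedRpow_of_nonneg {p x : ℝ} (hp : 1 < p) (hx : 0 ≤ x) :
    signedRpow p x = x ^ (p - 1) := by
  rcases hx.eq_or_lt with rfl | hx
  · simp [signedRpow, Real.zero_rpow (by linarith : p - 1 ≠ 0)]
  · rw [signedRpow, abs_of_pos hx, ← Real.rpow_add_one hx.ne']
    ring_nf

lemma signedRpow_nonneg {p x : ℝ} (hp : 1 < p) (hx : 0 ≤ x) : 0 ≤ signedRpow p x := by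
  rw [signedRpow_of_nonneg hp hx]
  positivity

lemma strictMono_signedRpow {p : ℝ} (hp : 1 < p) : StrictMono (signedRpow p) := by
  refine strictMono_of_odd_strictMonoOn_nonneg (signedRpow_neg p) fun x hx y hy hxy => ?_
  rw [signedRpow_of_nonneg hp hx, signedRpow_of_nonneg hp hy]
  exact Real.rpow_lt_rpow hx hxy (by linarith)

lemma hasDerivAt_abs_add_rpow {p : ℝ} (hp : 1 < p) (c : ℝ) :
    HasDerivAt (fun t : ℝ => |c + t| ^ p) (p * signedRpow p c) 0 := by
  have h := (hasDerivAt_abs_rpow (c + 0) hp).comp (0 : ℝ) ((hasDerivAt_id (0 : ℝ)).const_add c)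
  simpa [Function.comp_def, signedRpow, mul_assoc] using h

lemma edgeTerm_nonneg {V : Type*} {p : ℝ} (f : V → ℝ) (e : Sym2 V) :
    0 ≤ edgeTerm p f e := by
  induction e using Sym2.ind with
  | _ a b => exact Real.rpow_nonneg (abs_nonneg _) _

section Mass

variable {V : Type*} [Fintype V] {p : ℝ}

def pMass (p : ℝ) (f : V → ℝ) : ℝ := ∑ v, |f v| ^ p

lemma pMass_pos {f : V → ℝ} (hf : f ≠ 0) : 0 < pMass p f := by
  obtain ⟨v, hv⟩ := Function.ne_iff.mp hf
  exact sum_pos' (fun w _ => Real.rpow_nonneg (abs_nonneg _) _)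
    ⟨v, mem_univ v, Real.rpow_pos_of_pos (abs_pos.mpr hv) _⟩

lemma continuous_pMass (hp : 0 ≤ p) : Continuous (pMass (V := V) p) :=
  continuous_finsetSum _ fun v _ => (continuous_apply v).abs.rpow_const fun _ => Or.inr hp

lemma pMass_update [DecidableEq V] (f : V → ℝ) (v : V) (a : ℝ) :
    pMass p (Function.update f v a) = ∑ w ∈ univ \ {v}, |f w| ^ p + |a| ^ p := by
  rw [pMass, add_comm, ← sum_update_of_mem (mem_univ v) (fun w => |f w| ^ p)]
  refine sum_congr rfl fun w _ => ?_
  by_cases hw : w = v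
  · subst hw; simp only [Function.update_self]
  · simp only [Function.update_of_ne hw]

end Mass

namespace SimpleGraph

variable {V : Type*} [Fintype V] (G : SimpleGraph V) (p : ℝ)

def pEnergy (f : V → ℝ) : ℝ := ∑ e ∈ G.edgeFinset, edgeTerm p f e

def dirichletSubspace : Submodule ℝ (V → ℝ) where
  carrier := {f | ∀ v, G.degree v = 1 → f v = 0}
  add_mem' hf hg v hv := by simp [hf v hv, hg v hv]
  zero_mem' _ _ := rfl
  smul_mem' c f hf v hv := by simp [hf v hv]

section

variable [DecidableEq V]

lemma rayleigh_eq_div (f : V → ℝ) : rayleigh G p f = G.pEnergy p f / pMass p f := rfl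

structure IsDirichletMinimizer (f : V → ℝ) : Prop where
  ne_zero : f ≠ 0
  mem : f ∈ G.dirichletSubspace
  le : ∀ g ∈ G.dirichletSubspace, g ≠ 0 → rayleigh G p f ≤ rayleigh G p g

end

variable {G p}

lemma pEnergy_nonneg (f : V → ℝ) : 0 ≤ G.pEnergy p f :=
  sum_nonneg fun e _ => edgeTerm_nonneg f e

lemma continuous_pEnergy (hp : 0 ≤ p) : Continuous (G.pEnergy p) := by
  refine continuous_finsetSum _ fun e _ => ?_
  induction e using Sym2.ind with
  | _ a b =>
    exact (((continuous_apply a).sub (continuous_apply b)).abs).rpow_const fun _ => Or.inr hp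

variable [DecidableEq V]

lemma rayleigh_nonneg (f : V → ℝ) : 0 ≤ rayleigh G p f :=
  div_nonneg (pEnergy_nonneg f) (sum_nonneg fun _ _ => Real.rpow_nonneg (abs_nonneg _) _)

lemma lambda1_le_rayleigh {f : V → ℝ} (hf : f ∈ G.dirichletSubspace) (hf0 : f ≠ 0) :
    lambda1 G p ≤ rayleigh G p f :=
  csInf_le ⟨0, by rintro r ⟨g, -, -, rfl⟩; exact rayleigh_nonneg g⟩ ⟨f, hf0, hf, rfl⟩

lemma IsDirichletMinimizer.lambda1_eq {f : V → ℝ} (hf : G.IsDirichletMinimizer p f) :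
    lambda1 G p = rayleigh G p f := by
  refine IsLeast.csInf_eq ⟨⟨f, hf.ne_zero, hf.mem, rfl⟩, ?_⟩
  rintro r ⟨g, hg0, hg, rfl⟩
  exact hf.le g hg hg0

lemma IsDirichletMinimizer.rayleigh_mul_pMass_le {f g : V → ℝ}
    (hf : G.IsDirichletMinimizer p f) (hp : 0 < p) (hg : g ∈ G.dirichletSubspace) :
    rayleigh G p f * pMass p g ≤ G.pEnergy p g := by
  by_cases hg0 : g = 0
  · simp [hg0, pMass, Real.zero_rpow hp.ne', pEnergy_nonneg]
  · rw [← le_div_iff₀ (pMass_pos hg0)]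
    exact hf.le g hg hg0

lemma rayleigh_smul {c : ℝ} (hc : c ≠ 0) (f : V → ℝ) :
    rayleigh G p (c • f) = rayleigh G p f := by
  have hE : G.pEnergy p (c • f) = |c| ^ p * G.pEnergy p f := by
    rw [pEnergy, pEnergy, mul_sum]
    refine sum_congr rfl fun e _ => ?_
    induction e using Sym2.ind with
    | _ a b =>
      simp only [edgeTerm, Sym2.lift_mk, Pi.smul_apply, smul_eq_mul, ← mul_sub, abs_mul]
      exact Real.mul_rpow (abs_nonneg _) (abs_nonneg _)
  have hM : pMass p (c • f) = |c| ^ p * pMass p f := by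
    rw [pMass, pMass, mul_sum]
    refine sum_congr rfl fun v _ => ?_
    simp only [Pi.smul_apply, smul_eq_mul, abs_mul]
    exact Real.mul_rpow (abs_nonneg _) (abs_nonneg _)
  have hcp : |c| ^ p ≠ 0 := (Real.rpow_pos_of_pos (abs_pos.mpr hc) p).ne'
  rw [rayleigh_eq_div, rayleigh_eq_div, hE, hM, mul_div_mul_left _ _ hcp]

lemma rayleigh_abs_le (hp : 0 ≤ p) (f : V → ℝ) : rayleigh G p |f| ≤ rayleigh G p f := by
  have hM : pMass p |f| = pMass p f := sum_congr rfl fun v _ => by simp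
  rw [rayleigh_eq_div, rayleigh_eq_div, hM]
  refine div_le_div_of_nonneg_right (sum_le_sum fun e _ => ?_)
    (sum_nonneg fun _ _ => Real.rpow_nonneg (abs_nonneg _) _)
  induction e using Sym2.ind with
  | _ a b => exact Real.rpow_le_rpow (abs_nonneg _) (abs_abs_sub_abs_le_abs_sub _ _) hp

/-- The minimum is taken on the compact set of Dirichlet functions of sup norm one. -/
theorem exists_nonneg_isDirichletMinimizer (hp : 0 < p) {v : V} (hv : G.degree v ≠ 1) :
    ∃ f, 0 ≤ f ∧ G.IsDirichletMinimizer p f := by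
  set S := (G.dirichletSubspace : Set (V → ℝ)) ∩ Metric.sphere 0 1
  have hS : IsCompact S :=
    (isCompact_sphere 0 1).inter_left (Submodule.closed_of_finiteDimensional _)
  have hv_mem : Pi.single v 1 ∈ S := by
    refine ⟨fun w hw => Pi.single_eq_of_ne (by rintro rfl; exact hv hw) _, ?_⟩
    simp [Pi.norm_single]
  have hcont : ContinuousOn (rayleigh G p) S := by
    refine ((continuous_pEnergy hp.le).continuousOn).div (continuous_pMass hp.le).continuousOn
      fun f hf => (pMass_pos ?_).ne'
    rintro rfl
    simpa using hf.2
  obtain ⟨f, ⟨hfD, hf1⟩, hmin⟩ := hS.exists_isMinOn ⟨_, hv_mem⟩ hcont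
  have hf0 : f ≠ 0 := by rintro rfl; simp at hf1
  refine ⟨|f|, abs_nonneg f, fun h => hf0 ((Pi.abs_eq_zero f).mp h),
    fun w hw => by simp [hfD w hw], fun g hg hg0 => ?_⟩
  have hg_norm : ‖g‖⁻¹ ≠ 0 := inv_ne_zero (norm_ne_zero_iff.mpr hg0)
  have hgS : ‖g‖⁻¹ • g ∈ S := by
    refine ⟨G.dirichletSubspace.smul_mem _ hg, ?_⟩
    simp [norm_smul, inv_mul_cancel₀ (norm_ne_zero_iff.mpr hg0)]
  calc rayleigh G p |f| ≤ rayleigh G p f := rayleigh_abs_le hp.le f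
    _ ≤ rayleigh G p (‖g‖⁻¹ • g) := hmin hgS
    _ = rayleigh G p g := rayleigh_smul hg_norm g

lemma sum_edgeFinset_eq_sum_not_mem_add_sum_neighborFinset {M : Type*} [AddCommMonoid M]
    (h : Sym2 V → M) (v : V) :
    ∑ e ∈ G.edgeFinset, h e =
      ∑ e ∈ G.edgeFinset with v ∉ e, h e + ∑ w ∈ G.neighborFinset v, h s(v, w) := by
  have hinc : (G.neighborFinset v).image (s(v, ·)) = {e ∈ G.edgeFinset | v ∈ e} := by
    ext e
    simp only [mem_image, mem_neighborFinset, mem_filter, mem_edgeFinset]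
    constructor
    · rintro ⟨w, hw, rfl⟩
      exact ⟨hw, Sym2.mem_mk_left v w⟩
    · rintro ⟨he, hve⟩
      obtain ⟨w, rfl⟩ := Sym2.mem_iff_exists.mp hve
      exact ⟨w, he, rfl⟩
  rw [← sum_filter_not_add_sum_filter _ (v ∈ ·), ← hinc,
    sum_image fun a _ b _ hab => Sym2.congr_right.mp hab]

lemma pEnergy_update (f : V → ℝ) (v : V) (a : ℝ) :
    G.pEnergy p (Function.update f v a) = ∑ e ∈ G.edgeFinset with v ∉ e, edgeTerm p f e
      + ∑ w ∈ G.neighborFinset v, |a - f w| ^ p := by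
  rw [pEnergy, sum_edgeFinset_eq_sum_not_mem_add_sum_neighborFinset _ v]
  congr 1
  · refine sum_congr rfl fun e he => ?_
    induction e using Sym2.ind with
    | _ b c =>
      simp only [mem_filter, Sym2.mem_iff, not_or] at he
      simp only [edgeTerm, Sym2.lift_mk, Function.update_of_ne (Ne.symm he.2.1),
        Function.update_of_ne (Ne.symm he.2.2)]
  · refine sum_congr rfl fun w hw => ?_
    rw [mem_neighborFinset] at hw
    simp only [edgeTerm, Sym2.lift_mk, Function.update_self, Function.update_of_ne hw.ne.symm]

/-- The Euler–Lagrange equation: a minimizer is a `p`-Laplacian eigenfunction at every interior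
vertex `v`, as the first variation in the direction of the indicator of `v` vanishes. -/
theorem IsDirichletMinimizer.sum_signedRpow_eq {f : V → ℝ} (hf : G.IsDirichletMinimizer p f)
    (hp : 1 < p) {v : V} (hv : G.degree v ≠ 1) :
    ∑ w ∈ G.neighborFinset v, signedRpow p (f v - f w) =
      rayleigh G p f * signedRpow p (f v) := by
  set u : ℝ → V → ℝ := fun t => Function.update f v (f v + t)
  have hu : ∀ t, u t ∈ G.dirichletSubspace := fun t w hw => by
    simp only [u]
    rw [Function.update_of_ne (by rintro rfl; exact hv hw)]
    exact hf.mem w hw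
  have hE : ∀ t, G.pEnergy p (u t) = ∑ e ∈ G.edgeFinset with v ∉ e, edgeTerm p f e
      + ∑ w ∈ G.neighborFinset v, |f v - f w + t| ^ p := fun t => by
    simp only [u, pEnergy_update, add_sub_right_comm]
  have hM : ∀ t, pMass p (u t) = ∑ w ∈ univ \ {v}, |f w| ^ p + |f v + t| ^ p :=
    fun t => pMass_update f v _
  set μ := rayleigh G p f
  set q : ℝ → ℝ := fun t => G.pEnergy p (u t) - μ * pMass p (u t)
  have hq : IsLocalMin q 0 := Filter.Eventually.of_forall fun t => by
    have hu0 : u 0 = f := by simp [u]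
    have hμ : μ * pMass p f = G.pEnergy p f := div_mul_cancel₀ _ (pMass_pos hf.ne_zero).ne'
    simp only [q, hu0, hμ, sub_self]
    exact sub_nonneg.mpr (hf.rayleigh_mul_pMass_le (by linarith) (hu t))
  have hq' : HasDerivAt q (∑ w ∈ G.neighborFinset v, p * signedRpow p (f v - f w)
      - μ * (p * signedRpow p (f v))) 0 := by
    simp only [q, hE, hM]
    exact ((hasDerivAt_const _ _).add (HasDerivAt.fun_sum fun w _ =>
      hasDerivAt_abs_add_rpow hp _)).sub (((hasDerivAt_const _ _).add
        (hasDerivAt_abs_add_rpow hp _)).const_mul μ) |>.congr_deriv (by simp)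
  have h0 := hq.hasDerivAt_eq_zero hq'
  rw [← mul_sum] at h0
  exact mul_left_cancel₀ (by linarith : p ≠ 0) (by linear_combination h0)

end SimpleGraph

def pathDiff {n : ℕ} (f : Fin (n + 1) → ℝ) (i : Fin n) : ℝ := f i.succ - f i.castSucc

lemma pathG_adj {n : ℕ} {a b : Fin n} :
    (pathG n).Adj a b ↔ a.val + 1 = b.val ∨ b.val + 1 = a.val := by
  rw [pathG, fromRel_adj]
  exact ⟨fun h => h.2, fun h => ⟨by rintro rfl; omega, h⟩⟩

lemma pathG_edgeFinset (m : ℕ) :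
    (pathG (m + 1)).edgeFinset = univ.image fun i : Fin m => s(i.castSucc, i.succ) := by
  ext e
  induction e using Sym2.ind with
  | _ a b =>
    rw [mem_edgeFinset, mem_edgeSet, pathG_adj, mem_image]
    simp only [mem_univ, true_and, Sym2.eq_iff, Fin.ext_iff, Fin.val_castSucc, Fin.val_succ]
    constructor
    · rintro (h | h)
      · exact ⟨⟨a, by omega⟩, Or.inl ⟨rfl, h⟩⟩
      · exact ⟨⟨b, by omega⟩, Or.inr ⟨rfl, h⟩⟩
    · rintro ⟨i, h⟩
      omega

lemma pEnergy_pathG (p : ℝ) {m : ℕ} (f : Fin (m + 1) → ℝ) :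
    (pathG (m + 1)).pEnergy p f = ∑ i, |pathDiff f i| ^ p := by
  rw [pEnergy, pathG_edgeFinset, sum_image fun i _ j _ h => by
    simp only [Sym2.eq_iff, Fin.ext_iff, Fin.val_castSucc, Fin.val_succ] at h; omega]
  exact sum_congr rfl fun i _ => by simp [edgeTerm, pathDiff, abs_sub_comm]

lemma tadpole_edgeFinset (m : ℕ) :
    (tadpole (m + 3) 3).edgeFinset = insert s(0, 2) (pathG (m + 3)).edgeFinset := by
  ext e
  induction e using Sym2.ind with
  | _ a b =>
    rw [mem_insert, mem_edgeFinset, mem_edgeFinset, mem_edgeSet, mem_edgeSet, pathG_adj, tadpole,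
      fromRel_adj]
    simp only [Sym2.eq_iff, Fin.ext_iff, Fin.val_zero, Fin.val_two, ← Fin.val_ne_iff]
    omega

lemma pEnergy_tadpole (p : ℝ) {m : ℕ} (g : Fin (m + 3) → ℝ) :
    (tadpole (m + 3) 3).pEnergy p g = |g 2 - g 0| ^ p + ∑ i, |pathDiff g i| ^ p := by
  have h02 : s(0, 2) ∉ (pathG (m + 3)).edgeFinset := by
    rw [mem_edgeFinset, mem_edgeSet, pathG_adj, Fin.val_zero, Fin.val_two]; omega
  rw [pEnergy, tadpole_edgeFinset, sum_insert h02, ← pEnergy, pEnergy_pathG]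
  simp [edgeTerm, abs_sub_comm]

lemma pathG_neighborFinset_zero (m : ℕ) : (pathG (m + 2)).neighborFinset 0 = {1} := by
  ext w
  simp only [mem_neighborFinset, pathG_adj, mem_singleton, Fin.ext_iff, Fin.val_zero, Fin.val_one]
  omega

lemma pathG_neighborFinset_last (m : ℕ) :
    (pathG (m + 2)).neighborFinset (Fin.last (m + 1)) = {(Fin.last m).castSucc} := by
  ext w
  simp only [mem_neighborFinset, pathG_adj, mem_singleton, Fin.ext_iff, Fin.val_last,
    Fin.val_castSucc]
  omega

lemma pathG_neighborFinset_succ_castSucc {m : ℕ} (i : Fin m) :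
    (pathG (m + 2)).neighborFinset i.succ.castSucc = {i.castSucc.castSucc, i.succ.succ} := by
  ext w
  simp only [mem_neighborFinset, pathG_adj, mem_insert, mem_singleton, Fin.ext_iff,
    Fin.val_castSucc, Fin.val_succ]
  omega

lemma Fin.castSucc_castSucc_ne_succ_succ {m : ℕ} (i : Fin m) :
    i.castSucc.castSucc ≠ i.succ.succ := by
  simp only [ne_eq, Fin.ext_iff, Fin.val_castSucc, Fin.val_succ]
  omega

lemma pathG_degree_succ_castSucc {m : ℕ} (i : Fin m) :
    (pathG (m + 2)).degree i.succ.castSucc = 2 := by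
  rw [← card_neighborFinset_eq_degree, pathG_neighborFinset_succ_castSucc,
    card_pair (Fin.castSucc_castSucc_ne_succ_succ i)]

lemma apply_zero_and_last_of_mem_dirichletSubspace_pathG {m : ℕ} {f : Fin (m + 2) → ℝ}
    (hf : f ∈ (pathG (m + 2)).dirichletSubspace) : f 0 = 0 ∧ f (Fin.last _) = 0 :=
  ⟨hf 0 (by rw [← card_neighborFinset_eq_degree, pathG_neighborFinset_zero, card_singleton]),
    hf _ (by rw [← card_neighborFinset_eq_degree, pathG_neighborFinset_last, card_singleton])⟩

/-- Every vertex `v` but the last has the two neighbours `v + 1` and `v - 1` (or `2` if `v = 0`). -/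
lemma mem_dirichletSubspace_tadpole_of_last {m : ℕ} {g : Fin (m + 3) → ℝ}
    (hg : g (Fin.last _) = 0) : g ∈ (tadpole (m + 3) 3).dirichletSubspace := by
  intro v hv
  by_cases hvl : v = Fin.last _
  · rw [hvl, hg]
  have hv' : v.val < m + 2 := by simpa using Fin.val_lt_last hvl
  have hadj : ∀ w : Fin (m + 3), (tadpole (m + 3) 3).Adj v w ↔ v ≠ w ∧
      (v.val + 1 = w.val ∨ v.val = 0 ∧ w.val = 2 ∨ w.val + 1 = v.val ∨ w.val = 0 ∧ v.val = 2) :=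
    fun w => by rw [tadpole, fromRel_adj]; omega
  obtain ⟨u, hu, huv⟩ : ∃ u : Fin (m + 3), (tadpole (m + 3) 3).Adj v u ∧ u.val ≠ v.val + 1 := by
    by_cases h0 : v.val = 0
    · refine ⟨2, (hadj 2).mpr ?_, by simp only [Fin.val_two]; omega⟩
      simp only [ne_eq, Fin.ext_iff, Fin.val_two, and_true]; omega
    · refine ⟨⟨v.val - 1, by omega⟩, (hadj _).mpr ?_, by simp only; omega⟩
      simp only [ne_eq, Fin.ext_iff]; omega
  have hsub : {u, ⟨v.val + 1, by omega⟩} ⊆ (tadpole (m + 3) 3).neighborFinset v := by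
    intro x hx
    rcases mem_insert.mp hx with rfl | hx
    · exact (mem_neighborFinset _ _ _).mpr hu
    · rw [mem_singleton.mp hx, mem_neighborFinset, hadj]
      simp only [ne_eq, Fin.ext_iff, true_or, and_true]; omega
  have := card_le_card hsub
  rw [card_pair (by simp only [ne_eq, Fin.ext_iff]; omega), card_neighborFinset_eq_degree, hv]
    at this
  omega

theorem SimpleGraph.IsDirichletMinimizer.antitone_pathDiff {p : ℝ} {m : ℕ}
    {f : Fin (m + 2) → ℝ} (hf : (pathG (m + 2)).IsDirichletMinimizer p f) (hp : 1 < p)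
    (hf0 : 0 ≤ f) : Antitone (pathDiff f) := by
  refine Fin.antitone_iff_succ_le.mpr fun i => ?_
  have hEL := hf.sum_signedRpow_eq hp (v := i.succ.castSucc)
    (by rw [pathG_degree_succ_castSucc]; norm_num)
  rw [pathG_neighborFinset_succ_castSucc, sum_pair (Fin.castSucc_castSucc_ne_succ_succ i),
    ← neg_sub (f i.succ.succ), signedRpow_neg] at hEL
  have hrhs : 0 ≤ rayleigh (pathG (m + 2)) p f * signedRpow p (f i.succ.castSucc) :=
    mul_nonneg (rayleigh_nonneg f) (signedRpow_nonneg hp (hf0 _))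
  rw [pathDiff, pathDiff, ← (strictMono_signedRpow hp).le_iff_le, Fin.succ_castSucc]
  linarith

lemma pathDiff_zero_pos {m : ℕ} {f : Fin (m + 2) → ℝ} (hf : 0 ≤ f) (hf0 : f 0 = 0)
    (hne : f ≠ 0) (hd : Antitone (pathDiff f)) : 0 < pathDiff f 0 := by
  by_contra! h
  have hanti : Antitone f := Fin.antitone_iff_succ_le.mpr fun i =>
    sub_nonpos.mp ((hd (Fin.zero_le i)).trans h)
  exact hne (funext fun v => le_antisymm ((hanti (Fin.zero_le v)).trans_eq hf0) (hf v))

lemma pathDiff_comp_rev {n : ℕ} (f : Fin (n + 1) → ℝ) (i : Fin n) :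
    pathDiff (f ∘ Fin.rev) i = -pathDiff f i.rev := by
  simp [pathDiff, Fin.rev_succ, Fin.rev_castSucc]

lemma antitone_pathDiff_comp_rev {n : ℕ} {f : Fin (n + 1) → ℝ} (hd : Antitone (pathDiff f)) :
    Antitone (pathDiff (f ∘ Fin.rev)) := by
  intro i j hij
  rw [pathDiff_comp_rev, pathDiff_comp_rev, neg_le_neg_iff]
  exact hd (Fin.rev_le_rev.mpr hij)

lemma rayleigh_pathG_comp_rev (p : ℝ) {n : ℕ} (f : Fin (n + 1) → ℝ) :
    rayleigh (pathG (n + 1)) p (f ∘ Fin.rev) = rayleigh (pathG (n + 1)) p f := by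
  rw [rayleigh_eq_div, rayleigh_eq_div, pEnergy_pathG, pEnergy_pathG, pMass, pMass]
  simp only [pathDiff_comp_rev, abs_neg, Function.comp_apply, ← Fin.revPerm_apply]
  rw [Equiv.sum_comp Fin.revPerm (fun i => |pathDiff f i| ^ p),
    Equiv.sum_comp Fin.revPerm (fun v => |f v| ^ p)]

/-- Delete `v₀, v₁` from the path and attach a twin of `v₂` to `v₂` and `v₃`: the twin becomes
the vertex `0` of the tadpole. -/
def pathFold {n : ℕ} (f : Fin (n + 3) → ℝ) : Fin (n + 2) → ℝ :=
  Fin.cons (f 2) fun i => f i.succ.succ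

lemma pEnergy_tadpole_pathFold {p : ℝ} (hp : 0 < p) {m : ℕ} (f : Fin (m + 4) → ℝ) :
    (tadpole (m + 3) 3).pEnergy p (pathFold f) + |pathDiff f 0| ^ p + |pathDiff f 1| ^ p =
      (pathG (m + 4)).pEnergy p f + |pathDiff f 2| ^ p := by
  have hsucc : ∀ i : Fin (m + 1), pathDiff (pathFold f) i.succ = pathDiff f i.succ.succ :=
    fun i => by simp only [pathDiff, pathFold, ← Fin.succ_castSucc, Fin.cons_succ]
  have h0 : pathDiff (pathFold f) 0 = 0 := sub_self (f 2)
  have h2 : pathFold f 2 - pathFold f 0 = pathDiff f 2 := rfl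
  rw [pEnergy_tadpole, pEnergy_pathG, Fin.sum_univ_succ, Fin.sum_univ_succ (n := m + 2),
    Fin.sum_univ_succ (n := m + 1), h0, h2, Fin.succ_zero_eq_one]
  simp only [hsucc, abs_zero, Real.zero_rpow hp.ne']
  ring

lemma pMass_pathFold (p : ℝ) {n : ℕ} (f : Fin (n + 3) → ℝ) :
    pMass p (pathFold f) + |f 0| ^ p + |f 1| ^ p = pMass p f + |f 2| ^ p := by
  simp only [pMass, pathFold, Fin.sum_univ_succ (n := n + 2), Fin.sum_univ_succ (n := n + 1),
    Fin.cons_zero, Fin.cons_succ, Fin.succ_zero_eq_one]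
  ring

/-- Either `b > 0` and `|c| ≤ a`, or `b = 0` and `|c| ≤ a / 2`. -/
lemma abs_rpow_lt_rpow_add_rpow {p a b c : ℝ} (hp : 0 < p) (ha : 0 < a) (hb : 0 ≤ b)
    (hba : b ≤ a) (hcb : c ≤ b) (hc : 0 ≤ a + b + 2 * c) : |c| ^ p < a ^ p + b ^ p := by
  rcases hb.eq_or_lt with rfl | hb
  · rw [Real.zero_rpow hp.ne', add_zero]
    exact Real.rpow_lt_rpow (abs_nonneg c) (abs_lt.mpr ⟨by linarith, by linarith⟩) hp
  · calc |c| ^ p ≤ a ^ p :=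
        Real.rpow_le_rpow (abs_nonneg c) (abs_le.mpr ⟨by linarith, by linarith⟩) hp.le
      _ < a ^ p + b ^ p := lt_add_of_pos_right _ (Real.rpow_pos_of_pos hb p)

theorem lambda1_tadpole_lt_rayleigh_pathG {p : ℝ} (hp : 0 < p) {m : ℕ} {f : Fin (m + 5) → ℝ}
    (hf : 0 ≤ f) (hf0 : f 0 = 0) (hfl : f (Fin.last _) = 0) (hne : f ≠ 0)
    (hd : Antitone (pathDiff f)) (hd1 : 0 ≤ pathDiff f 1) :
    lambda1 (tadpole (m + 4) 3) p < rayleigh (pathG (m + 5)) p f := by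
  set d := pathDiff f
  have hd0 : 0 < d 0 := pathDiff_zero_pos hf hf0 hne hd
  obtain ⟨hd0f, hd1f, hd2f, hd3f⟩ :
      d 0 = f 1 - f 0 ∧ d 1 = f 2 - f 1 ∧ d 2 = f 3 - f 2 ∧ d 3 = f 4 - f 3 :=
    ⟨rfl, rfl, rfl, rfl⟩
  have hf4 : 0 ≤ f 4 := hf 4
  have hkey : |d 2| ^ p < |d 0| ^ p + |d 1| ^ p := by
    rw [abs_of_pos hd0, abs_of_nonneg hd1]
    have h12 : d 2 ≤ d 1 := hd (Fin.le_def.mpr (by simp [Nat.mod_eq_of_lt]))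
    have h23 : d 3 ≤ d 2 := hd (Fin.le_def.mpr (by simp [Nat.mod_eq_of_lt]))
    exact abs_rpow_lt_rpow_add_rpow hp hd0 hd1 (hd (Fin.zero_le 1)) h12 (by linarith)
  have hmass : |f 1| ^ p ≤ |f 2| ^ p := by
    refine Real.rpow_le_rpow (abs_nonneg _) ?_ hp.le
    rw [abs_of_nonneg (hf 1), abs_of_nonneg (hf 2)]
    linarith
  have hg0 : pathFold f ≠ 0 := fun h => by
    have : f 2 = 0 := congrFun h 0
    linarith
  have hgD := mem_dirichletSubspace_tadpole_of_last (g := pathFold f) hfl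
  refine (lambda1_le_rayleigh hgD hg0).trans_lt ?_
  have hE := pEnergy_tadpole_pathFold hp f
  have hM : pMass p (pathFold f) = pMass p f + (|f 2| ^ p - |f 1| ^ p) := by
    have := pMass_pathFold p f
    rw [hf0, abs_zero, Real.zero_rpow hp.ne'] at this
    linarith
  set μ := rayleigh (pathG (m + 5)) p f
  have hμ : μ * pMass p f = (pathG (m + 5)).pEnergy p f := div_mul_cancel₀ _ (pMass_pos hne).ne'
  have hμ0 : 0 ≤ μ * (|f 2| ^ p - |f 1| ^ p) :=
    mul_nonneg (rayleigh_nonneg f) (sub_nonneg.mpr hmass)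
  rw [rayleigh_eq_div, div_lt_iff₀ (pMass_pos hg0), hM, mul_add]
  linarith

/-- Comparison of the first `p`-Dirichlet eigenvalues of `P_{n+1}` and `T_{n,3}`. -/
theorem path_gt_tadpole (n : ℕ) (hn : 4 ≤ n) {p : ℝ} (hp : 1 < p) :
    lambda1 (pathG (n + 1)) p > lambda1 (tadpole n 3) p := by
  obtain ⟨m, rfl⟩ : ∃ m, n = m + 4 := ⟨n - 4, by omega⟩
  have hp0 : 0 < p := by linarith
  obtain ⟨f, hf, hmin⟩ := (pathG (m + 4 + 1)).exists_nonneg_isDirichletMinimizer hp0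
    (v := (0 : Fin (m + 3)).succ.castSucc) (by rw [pathG_degree_succ_castSucc]; norm_num)
  obtain ⟨hf0, hfl⟩ := apply_zero_and_last_of_mem_dirichletSubspace_pathG hmin.mem
  have hd := hmin.antitone_pathDiff hp hf
  rw [gt_iff_lt, hmin.lambda1_eq]
  rcases le_or_gt 0 (pathDiff f 1) with hd1 | hd1
  · exact lambda1_tadpole_lt_rayleigh_pathG hp0 hf hf0 hfl hmin.ne_zero hd hd1
  · have hne : f ∘ Fin.rev ≠ 0 := fun h =>
      hmin.ne_zero (funext fun v => by simpa using congrFun h v.rev)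
    have hd1' : 0 ≤ pathDiff (f ∘ Fin.rev) 1 := by
      rw [pathDiff_comp_rev, neg_nonneg]
      exact (hd (Fin.le_def.mpr (by simp [Nat.mod_eq_of_lt]))).trans hd1.le
    rw [← rayleigh_pathG_comp_rev]
    exact lambda1_tadpole_lt_rayleigh_pathG hp0 (fun v => hf v.rev) (by simpa using hfl)
      (by simpa using hf0) hne (antitone_pathDiff_comp_rev hd) hd1'
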